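/- arXiv:2402.16401 — 2 statements merged into one kernel-verified Lean document; each statement's English description precedes it below -/
import Mathlib

section
/- Let I ⊆ ℝ be an open interval containing 0, μ, σ : I → ℝ continuous with σ(z) > 0 on I, ρ > 0, and S' : I → (0,∞) a scale density with speed density m'. Let ψ, φ : I → ℝ solve the homogeneous equation, let G : I → ℝ be twice differentiable, set h(z) = ψ(0)·φ(z) − φ(0)·ψ(z) and A(z) = (G'(z)·h(z) − G(z)·h'(z))/S'(z). Then A is differentiable on I and A'(z) = m'(z)·h(z)·(½·σ(z)²·G''(z) + μ(z)·G'(z) − ρ·G(z)) for all z ∈ I. -/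
/-! The expression `A` is the Wronskian of `G` and `h` divided by the scale density. Writing
`L u = ½σ²u'' + μu' − ρu`, the scale equation `(S')' = −(2μ/σ²)S'` gives the Lagrange identity
`((v'u − vu')/S')' = m'·(u·Lv − v·Lu)`, and `h` is a linear combination of solutions, so `Lh = 0`. -/

theorem hasDerivAt_wronskian_div_scale {σ μ S u u' v v' : ℝ → ℝ} {u'' v'' z : ℝ} (ρ : ℝ)
    (hσ : σ z ≠ 0) (hS₀ : S z ≠ 0) (hS : HasDerivAt S (-(2 * μ z / σ z ^ 2) * S z) z)
    (hu : HasDerivAt u (u' z) z) (hu' : HasDerivAt u' u'' z)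
    (hv : HasDerivAt v (v' z) z) (hv' : HasDerivAt v' v'' z) :
    HasDerivAt (fun y => (v' y * u y - v y * u' y) / S y)
      (2 / (σ z ^ 2 * S z) *
        (u z * (σ z ^ 2 / 2 * v'' + μ z * v' z - ρ * v z)
          - v z * (σ z ^ 2 / 2 * u'' + μ z * u' z - ρ * u z))) z := by
  refine ((hv'.mul hu).sub (hv.mul hu')).div hS hS₀ |>.congr_deriv ?_
  simp only [Pi.sub_apply, Pi.mul_apply]
  field_simp
  ring

theorem stmt_11_general (lo hi : ℝ) (μ σ S ψ ψ' ψ'' φ φ' φ'' G G' G'' : ℝ → ℝ) (ρ : ℝ)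
    (hσpos : ∀ z ∈ Set.Ioo lo hi, 0 < σ z)
    (hSpos : ∀ z ∈ Set.Ioo lo hi, 0 < S z)
    (hS : ∀ z ∈ Set.Ioo lo hi, HasDerivAt S (-(2 * μ z / (σ z) ^ 2) * S z) z)
    (hψ : ∀ z ∈ Set.Ioo lo hi, HasDerivAt ψ (ψ' z) z)
    (hψ' : ∀ z ∈ Set.Ioo lo hi, HasDerivAt ψ' (ψ'' z) z)
    (hφ : ∀ z ∈ Set.Ioo lo hi, HasDerivAt φ (φ' z) z)
    (hφ' : ∀ z ∈ Set.Ioo lo hi, HasDerivAt φ' (φ'' z) z)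
    (hψhom : ∀ z ∈ Set.Ioo lo hi, (σ z) ^ 2 / 2 * ψ'' z + μ z * ψ' z - ρ * ψ z = 0)
    (hφhom : ∀ z ∈ Set.Ioo lo hi, (σ z) ^ 2 / 2 * φ'' z + μ z * φ' z - ρ * φ z = 0)
    (hG : ∀ z ∈ Set.Ioo lo hi, HasDerivAt G (G' z) z)
    (hG' : ∀ z ∈ Set.Ioo lo hi, HasDerivAt G' (G'' z) z) :
    ∀ z ∈ Set.Ioo lo hi,
      HasDerivAt
        (fun y => (G' y * (ψ 0 * φ y - φ 0 * ψ y)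
          - G y * (ψ 0 * φ' y - φ 0 * ψ' y)) / S y)
        ((2 / ((σ z) ^ 2 * S z)) * (ψ 0 * φ z - φ 0 * ψ z) *
          ((σ z) ^ 2 / 2 * G'' z + μ z * G' z - ρ * G z)) z := by
  intro z hz
  have hh_solves : (σ z) ^ 2 / 2 * (ψ 0 * φ'' z - φ 0 * ψ'' z)
      + μ z * (ψ 0 * φ' z - φ 0 * ψ' z) - ρ * (ψ 0 * φ z - φ 0 * ψ z) = 0 := by
    linear_combination ψ 0 * hφhom z hz - φ 0 * hψhom z hz
  have hh : HasDerivAt (fun y => ψ 0 * φ y - φ 0 * ψ y) (ψ 0 * φ' z - φ 0 * ψ' z) z :=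
    ((hφ z hz).const_mul _).sub ((hψ z hz).const_mul _)
  have hh' : HasDerivAt (fun y => ψ 0 * φ' y - φ 0 * ψ' y) (ψ 0 * φ'' z - φ 0 * ψ'' z) z :=
    ((hφ' z hz).const_mul _).sub ((hψ' z hz).const_mul _)
  refine (hasDerivAt_wronskian_div_scale ρ (hσpos z hz).ne' (hSpos z hz).ne' (hS z hz)
    hh hh' (hG z hz) (hG' z hz)).congr_deriv ?_
  rw [hh_solves]
  ring

/-- On an open interval `I = (lo, hi)` containing `0`, with `ψ, φ`
solutions of the homogeneous equation, `G` twice differentiable,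
`h(z) = ψ(0)·φ(z) − φ(0)·ψ(z)` and `A(z) = (G'(z)·h(z) − G(z)·h'(z))/S'(z)`,
the function `A` is differentiable with
`A'(z) = m'(z)·h(z)·(½σ(z)²·G''(z) + μ(z)·G'(z) − ρ·G(z))` on `I`. -/
theorem stmt_11 (lo hi : ℝ) (μ σ S ψ ψ' ψ'' φ φ' φ'' G G' G'' : ℝ → ℝ) (ρ : ℝ)
    (hρ : 0 < ρ) (h0 : (0:ℝ) ∈ Set.Ioo lo hi)
    (hμ : ContinuousOn μ (Set.Ioo lo hi))
    (hσ : ContinuousOn σ (Set.Ioo lo hi))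
    (hσpos : ∀ z ∈ Set.Ioo lo hi, 0 < σ z)
    (hSpos : ∀ z ∈ Set.Ioo lo hi, 0 < S z)
    (hS : ∀ z ∈ Set.Ioo lo hi, HasDerivAt S (-(2 * μ z / (σ z) ^ 2) * S z) z)
    (hψ : ∀ z ∈ Set.Ioo lo hi, HasDerivAt ψ (ψ' z) z)
    (hψ' : ∀ z ∈ Set.Ioo lo hi, HasDerivAt ψ' (ψ'' z) z)
    (hφ : ∀ z ∈ Set.Ioo lo hi, HasDerivAt φ (φ' z) z)
    (hφ' : ∀ z ∈ Set.Ioo lo hi, HasDerivAt φ' (φ'' z) z)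
    (hψhom : ∀ z ∈ Set.Ioo lo hi, (σ z) ^ 2 / 2 * ψ'' z + μ z * ψ' z - ρ * ψ z = 0)
    (hφhom : ∀ z ∈ Set.Ioo lo hi, (σ z) ^ 2 / 2 * φ'' z + μ z * φ' z - ρ * φ z = 0)
    (hG : ∀ z ∈ Set.Ioo lo hi, HasDerivAt G (G' z) z)
    (hG' : ∀ z ∈ Set.Ioo lo hi, HasDerivAt G' (G'' z) z) :
    ∀ z ∈ Set.Ioo lo hi,
      HasDerivAt
        (fun y => (G' y * (ψ 0 * φ y - φ 0 * ψ y)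
          - G y * (ψ 0 * φ' y - φ 0 * ψ' y)) / S y)
        ((2 / ((σ z) ^ 2 * S z)) * (ψ 0 * φ z - φ 0 * ψ z) *
          ((σ z) ^ 2 / 2 * G'' z + μ z * G' z - ρ * G z)) z :=
  stmt_11_general lo hi μ σ S ψ ψ' ψ'' φ φ' φ'' G G' G'' ρ hσpos hSpos hS hψ hψ' hφ hφ' hψhom hφhom
    hG hG'
end

section
/- Let I ⊆ ℝ be an open interval containing 0, μ, σ : I → ℝ continuous with σ(z) > 0 on I, ρ > 0, and S' : I → (0,∞) a scale density with speed density m'. Let ψ, φ : I → ℝ solve the homogeneous equation, let G : I → ℝ be twice continuously differentiable, set h(z) = ψ(0)·φ(z) − φ(0)·ψ(z) and A(z) = (G'(z)·h(z) − G(z)·h'(z))/S'(z). Suppose b ∈ I satisfies h(b) < 0, A(b) = 0, and ½·σ(b)²·G''(b) + μ(b)·G'(b) − ρ·G(b) < 0. Then the function F(z) = G(z)/h(z), defined on a neighborhood of b where h ≠ 0, satisfies F'(b) = 0 and F''(b) > 0; in particular F has a strict local minimum at b. -/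
/-!
Write `h = ψ(0)·φ − φ(0)·ψ` and `W = G'·h − G·h'`, so that `F = G / h` has `F' = W / h²`.
The hypothesis `A(b) = 0` says `W(b) = 0`, so `b` is critical and `F''(b) = W'(b) / h(b)²` with
`W' = G''·h − G·h''`. Since `h` solves the homogeneous equation, eliminating `h''` and `G''` gives
`½σ²·W' = h·(½σ²G'' + μG' − ρG) − μ·W`, which at `b` is a product of two negative numbers.
A positive second derivative then makes `F'` change sign from − to + at `b`, so `F` is strictly
decreasing to the left of `b` and strictly increasing to the right.
-/

open Set Filter Topology

theorem HasDerivAt.div_of_apply_eq_zero {𝕜 : Type*} [NontriviallyNormedField 𝕜] {u v : 𝕜 → 𝕜}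
    {u' v' b : 𝕜} (hu : HasDerivAt u u' b) (hv : HasDerivAt v v' b) (hvb : v b ≠ 0)
    (hub : u b = 0) : HasDerivAt (fun x => u x / v x) (u' / v b) b :=
  (hu.div hv hvb).congr_deriv (by rw [hub, zero_mul, sub_zero]; field_simp)

/-- Strict form of the second-derivative test. -/
theorem eventually_lt_of_hasDerivAt_of_deriv_pos {f f' : ℝ → ℝ} {b c : ℝ}
    (hf : ∀ᶠ z in 𝓝 b, HasDerivAt f (f' z) z) (hf'b : f' b = 0) (hf' : HasDerivAt f' c b)
    (hc : 0 < c) : ∀ᶠ z in 𝓝[≠] b, f b < f z := by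
  have hslope : ∀ᶠ z in 𝓝 b, z ≠ b → 0 < slope f' b z :=
    eventually_nhdsWithin_iff.1 <|
      (hasDerivAt_iff_tendsto_slope.1 hf').eventually (eventually_gt_nhds hc)
  obtain ⟨a, d, ⟨hab, hbd⟩, hsub⟩ := mem_nhds_iff_exists_Ioo_subset.1 (hf.and hslope)
  have hcont : ContinuousOn f (Ioo a d) := fun x hx => (hsub hx).1.continuousAt.continuousWithinAt
  have hmono : StrictMonoOn f (Ico b d) := by
    refine strictMonoOn_of_hasDerivWithinAt_pos (f' := f') (convex_Ico b d)
      (hcont.mono fun x hx => ⟨hab.trans_le hx.1, hx.2⟩) (fun x hx => ?_) (fun x hx => ?_)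
    all_goals rw [interior_Ico] at hx
    · exact (hsub ⟨hab.trans hx.1, hx.2⟩).1.hasDerivWithinAt
    · exact pos_of_slope_pos hx.1 ((hsub ⟨hab.trans hx.1, hx.2⟩).2 hx.1.ne') hf'b
  have hanti : StrictAntiOn f (Ioc a b) := by
    refine strictAntiOn_of_hasDerivWithinAt_neg (f' := f') (convex_Ioc a b)
      (hcont.mono fun x hx => ⟨hx.1, hx.2.trans_lt hbd⟩) (fun x hx => ?_) (fun x hx => ?_)
    all_goals rw [interior_Ioc] at hx
    · exact (hsub ⟨hx.1, hx.2.trans hbd⟩).1.hasDerivWithinAt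
    · exact neg_of_slope_pos hx.2 ((hsub ⟨hx.1, hx.2.trans hbd⟩).2 hx.2.ne) hf'b
  filter_upwards [nhdsWithin_le_nhds (Ioo_mem_nhds hab hbd), self_mem_nhdsWithin]
    with z hz (hzb : z ≠ b)
  rcases hzb.lt_or_gt with hzb | hbz
  · exact hanti ⟨hz.1, hzb.le⟩ ⟨hab, le_rfl⟩ hzb
  · exact hmono ⟨le_rfl, hbd⟩ ⟨hbz.le, hz.2⟩ hbz

theorem mul_sub_mul_pos_of_generator_neg {s μ ρ g g' g'' k k' k'' : ℝ} (hs : 0 < s) (hk : k < 0)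
    (hLk : s * k'' + μ * k' - ρ * k = 0) (hW : g' * k - g * k' = 0)
    (hLg : s * g'' + μ * g' - ρ * g < 0) : 0 < g'' * k - g * k'' := by
  have key : s * (g'' * k - g * k'') = k * (s * g'' + μ * g' - ρ * g) := by
    linear_combination (-g) * hLk - μ * hW
  exact pos_of_mul_pos_right (key ▸ mul_pos_of_neg_of_neg hk hLg) hs.le

theorem stmt_13_general (lo hi : ℝ) (μ σ S ψ ψ' ψ'' φ φ' φ'' G G' G'' : ℝ → ℝ) (ρ : ℝ)
    (hσpos : ∀ z ∈ Set.Ioo lo hi, 0 < σ z)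
    (hSpos : ∀ z ∈ Set.Ioo lo hi, 0 < S z)
    (hψ : ∀ z ∈ Set.Ioo lo hi, HasDerivAt ψ (ψ' z) z)
    (hψ' : ∀ z ∈ Set.Ioo lo hi, HasDerivAt ψ' (ψ'' z) z)
    (hφ : ∀ z ∈ Set.Ioo lo hi, HasDerivAt φ (φ' z) z)
    (hφ' : ∀ z ∈ Set.Ioo lo hi, HasDerivAt φ' (φ'' z) z)
    (hψhom : ∀ z ∈ Set.Ioo lo hi, (σ z) ^ 2 / 2 * ψ'' z + μ z * ψ' z - ρ * ψ z = 0)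
    (hφhom : ∀ z ∈ Set.Ioo lo hi, (σ z) ^ 2 / 2 * φ'' z + μ z * φ' z - ρ * φ z = 0)
    (hG : ∀ z ∈ Set.Ioo lo hi, HasDerivAt G (G' z) z)
    (hG' : ∀ z ∈ Set.Ioo lo hi, HasDerivAt G' (G'' z) z)
    (b : ℝ) (hb : b ∈ Set.Ioo lo hi)
    (hhb : ψ 0 * φ b - φ 0 * ψ b < 0)
    (hAb : (G' b * (ψ 0 * φ b - φ 0 * ψ b)
      - G b * (ψ 0 * φ' b - φ 0 * ψ' b)) / S b = 0)
    (hLGb : (σ b) ^ 2 / 2 * G'' b + μ b * G' b - ρ * G b < 0) :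
    ∃ F' : ℝ → ℝ,
      (∀ᶠ z in nhds b,
        HasDerivAt (fun y => G y / (ψ 0 * φ y - φ 0 * ψ y)) (F' z) z) ∧
      F' b = 0 ∧
      (∃ c : ℝ, 0 < c ∧ HasDerivAt F' c b) ∧
      (∀ᶠ z in nhdsWithin b {b}ᶜ,
        G b / (ψ 0 * φ b - φ 0 * ψ b) < G z / (ψ 0 * φ z - φ 0 * ψ z)) := by
  set h : ℝ → ℝ := fun z => ψ 0 * φ z - φ 0 * ψ z
  set h' : ℝ → ℝ := fun z => ψ 0 * φ' z - φ 0 * ψ' z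
  set F' : ℝ → ℝ := fun z => (G' z * h z - G z * h' z) / h z ^ 2
  have hh : ∀ z ∈ Ioo lo hi, HasDerivAt h (h' z) z := fun z hz =>
    ((hφ z hz).const_mul _).sub ((hψ z hz).const_mul _)
  have hh' : HasDerivAt h' (ψ 0 * φ'' b - φ 0 * ψ'' b) b :=
    ((hφ' b hb).const_mul _).sub ((hψ' b hb).const_mul _)
  have hW : G' b * h b - G b * h' b = 0 :=
    (div_eq_zero_iff.1 hAb).resolve_right (hSpos b hb).ne'
  have hF : ∀ᶠ z in 𝓝 b, HasDerivAt (fun y => G y / h y) (F' z) z := by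
    filter_upwards [isOpen_Ioo.mem_nhds hb, (hh b hb).continuousAt.eventually_lt_const hhb]
      with z hz hhz
    exact (hG z hz).div (hh z hz) hhz.ne
  have hF'b : F' b = 0 := by simp [F', hW]
  have hF'' : HasDerivAt F' ((G'' b * h b - G b * (ψ 0 * φ'' b - φ 0 * ψ'' b)) / h b ^ 2) b :=
    ((((hG' b hb).mul (hh b hb)).sub ((hG b hb).mul hh')).div_of_apply_eq_zero
      ((hh b hb).fun_pow 2) (pow_ne_zero 2 hhb.ne) hW).congr_deriv (by ring)
  have hLh : σ b ^ 2 / 2 * (ψ 0 * φ'' b - φ 0 * ψ'' b) + μ b * h' b - ρ * h b = 0 := by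
    linear_combination ψ 0 * hφhom b hb - φ 0 * hψhom b hb
  have hpos : 0 < (G'' b * h b - G b * (ψ 0 * φ'' b - φ 0 * ψ'' b)) / h b ^ 2 :=
    div_pos (mul_sub_mul_pos_of_generator_neg (by have := hσpos b hb; positivity) hhb hLh hW hLGb)
      (sq_pos_of_neg hhb)
  exact ⟨F', hF, hF'b, ⟨_, hpos, hF''⟩, eventually_lt_of_hasDerivAt_of_deriv_pos hF hF'b hF'' hpos⟩

/-- With `h(z) = ψ(0)·φ(z) − φ(0)·ψ(z)` and
`A(z) = (G'(z)·h(z) − G(z)·h'(z))/S'(z)`, if `b ∈ I` satisfies `h(b) < 0`,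
`A(b) = 0` and `½σ(b)²·G''(b) + μ(b)·G'(b) − ρ·G(b) < 0`, then `F(z) = G(z)/h(z)`
satisfies `F'(b) = 0` and `F''(b) > 0`; in particular `F` has a strict local
minimum at `b`. -/
theorem stmt_13 (lo hi : ℝ) (μ σ S ψ ψ' ψ'' φ φ' φ'' G G' G'' : ℝ → ℝ) (ρ : ℝ)
    (hρ : 0 < ρ) (h0 : (0:ℝ) ∈ Set.Ioo lo hi)
    (hμ : ContinuousOn μ (Set.Ioo lo hi))
    (hσ : ContinuousOn σ (Set.Ioo lo hi))
    (hσpos : ∀ z ∈ Set.Ioo lo hi, 0 < σ z)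
    (hSpos : ∀ z ∈ Set.Ioo lo hi, 0 < S z)
    (hS : ∀ z ∈ Set.Ioo lo hi, HasDerivAt S (-(2 * μ z / (σ z) ^ 2) * S z) z)
    (hψ : ∀ z ∈ Set.Ioo lo hi, HasDerivAt ψ (ψ' z) z)
    (hψ' : ∀ z ∈ Set.Ioo lo hi, HasDerivAt ψ' (ψ'' z) z)
    (hφ : ∀ z ∈ Set.Ioo lo hi, HasDerivAt φ (φ' z) z)
    (hφ' : ∀ z ∈ Set.Ioo lo hi, HasDerivAt φ' (φ'' z) z)
    (hψhom : ∀ z ∈ Set.Ioo lo hi, (σ z) ^ 2 / 2 * ψ'' z + μ z * ψ' z - ρ * ψ z = 0)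
    (hφhom : ∀ z ∈ Set.Ioo lo hi, (σ z) ^ 2 / 2 * φ'' z + μ z * φ' z - ρ * φ z = 0)
    (hG : ∀ z ∈ Set.Ioo lo hi, HasDerivAt G (G' z) z)
    (hG' : ∀ z ∈ Set.Ioo lo hi, HasDerivAt G' (G'' z) z)
    (hG''c : ContinuousOn G'' (Set.Ioo lo hi))
    (b : ℝ) (hb : b ∈ Set.Ioo lo hi)
    (hhb : ψ 0 * φ b - φ 0 * ψ b < 0)
    (hAb : (G' b * (ψ 0 * φ b - φ 0 * ψ b)
      - G b * (ψ 0 * φ' b - φ 0 * ψ' b)) / S b = 0)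
    (hLGb : (σ b) ^ 2 / 2 * G'' b + μ b * G' b - ρ * G b < 0) :
    ∃ F' : ℝ → ℝ,
      (∀ᶠ z in nhds b,
        HasDerivAt (fun y => G y / (ψ 0 * φ y - φ 0 * ψ y)) (F' z) z) ∧
      F' b = 0 ∧
      (∃ c : ℝ, 0 < c ∧ HasDerivAt F' c b) ∧
      (∀ᶠ z in nhdsWithin b {b}ᶜ,
        G b / (ψ 0 * φ b - φ 0 * ψ b) < G z / (ψ 0 * φ z - φ 0 * ψ z)) :=
  stmt_13_general lo hi μ σ S ψ ψ' ψ'' φ φ' φ'' G G' G'' ρ hσpos hSpos hψ hψ' hφ hφ' hψhom hφhom hG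
    hG' b hb hhb hAb hLGb
end
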